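/- Let σ ∈ 𝒞_q with des(σ) = d and let k ≥ max{d, 2} be an integer. Then for every σ-admissible deployment vector w ∈ ℤ^{k−1} there is a unique realization 𝒪 of σ under m_k with dep(𝒪) = w. -/

import Mathlib

open scoped Classical

noncomputable section

/-- The representative of `i : ZMod q` in `{1, …, q}`. -/
def rep (q : ℕ) [NeZero q] (i : ZMod q) : ℕ :=
  if i = 0 then q else i.val

/-- The rotation `ρ : i ↦ i + 1 (mod q)` of `ZMod q`. -/
def rotPerm (q : ℕ) : Equiv.Perm (ZMod q) :=
  Equiv.addRight 1

/-- The descent number `des σ`: the number of `i ∈ ZMod q` with `σ(i) > σ(i+1)`,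
values compared via their representatives in `{1, …, q}`. -/
def desNum (q : ℕ) [NeZero q] (σ : Equiv.Perm (ZMod q)) : ℕ :=
  (Finset.univ.filter fun i : ZMod q => rep q (σ (i + 1)) < rep q (σ i)).card

/-- `σ` is a `q`-cycle, i.e. it acts transitively on `ZMod q`. -/
def IsQCycle (q : ℕ) (σ : Equiv.Perm (ZMod q)) : Prop :=
  ∀ i j : ZMod q, ∃ n : ℕ, (σ ^ n) i = j

/-- The transition matrix of `σ`: the `(i,j)` entry is `1` if `j` lies in the
cyclic interval `[σ(i), σ(i+1))` of `ZMod q` and `0` otherwise. -/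
def transMatrix (q : ℕ) [NeZero q] (σ : Equiv.Perm (ZMod q)) :
    Matrix (ZMod q) (ZMod q) ℝ :=
  Matrix.of fun i j => if (j - σ i).val < (σ (i + 1) - σ i).val then (1 : ℝ) else 0

/-- A probability vector: non-negative components summing to `1`. -/
def IsProbVec (q : ℕ) [NeZero q] (v : ZMod q → ℝ) : Prop :=
  (∀ i, 0 ≤ v i) ∧ ∑ i, v i = 1

/-- The symmetry order of `σ`: the order of the stabilizer of `σ` in the rotation
group `⟨ρ⟩` acting by conjugation. -/
def symOrder (q : ℕ) [NeZero q] (σ : Equiv.Perm (ZMod q)) : ℕ :=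
  ((Finset.range q).filter fun j => rotPerm q ^ j * σ * (rotPerm q ^ j)⁻¹ = σ).card

/-- `F : ℝ → ℝ` is a lift of a degree `k` covering map of `ℝ/ℤ`:
a homeomorphism of `ℝ` with `F (t+1) = F t + k`. -/
def IsDegreeLift (k : ℕ) (F : ℝ → ℝ) : Prop :=
  Continuous F ∧ StrictMono F ∧ ∀ t, F (t + 1) = F t + k

/-- The fixed point of the circle map corresponding to `u` (a point with
`F u - u ∈ ℤ`) is topologically repelling: `t ↦ F t - t` is strictly increasing
in a neighborhood of `u`. -/
def TopRepelling (F : ℝ → ℝ) (u : ℝ) : Prop :=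
  ∃ ε > 0, StrictMonoOn (fun t => F t - t) (Set.Ioo (u - ε) (u + ε))

/-- `x : ZMod q → ℝ` is a period `q` orbit realizing `σ` for the circle map with
lift `F`: the points `x i` lie in `(0,1)` and are increasing with respect to the
representatives `{1, …, q}` (so that `0, x₁, …, x_q` are in positive cyclic
order), and on the circle `f(x i) = x (σ i)` for all `i`. -/
def IsRealization (q : ℕ) [NeZero q] (σ : Equiv.Perm (ZMod q))
    (F : ℝ → ℝ) (x : ZMod q → ℝ) : Prop :=
  (∀ i, x i ∈ Set.Ioo (0 : ℝ) 1) ∧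
  (∀ i j : ZMod q, rep q i < rep q j → x i < x j) ∧
  (∀ i, ∃ m : ℤ, F (x i) = x (σ i) + m)

/-- A realization of `σ` under the multiplication map `m_k : x ↦ kx (mod ℤ)`. -/
def MkRealization (q k : ℕ) [NeZero q] (σ : Equiv.Perm (ZMod q)) (x : ZMod q → ℝ) : Prop :=
  IsRealization q σ (fun t => (k : ℝ) * t) x

/-- The upper endpoint (as a real number) of the partition interval
`I i = [x i, x (i+1)]`; for `i = 0 ≡ q` the interval wraps around `0 ∈ ℝ/ℤ`
and the endpoint is `x 1 + 1`. -/
def upperPt (q : ℕ) [NeZero q] (x : ZMod q → ℝ) (i : ZMod q) : ℝ :=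
  if i = 0 then x 1 + 1 else x (i + 1)

/-- The `i`-th component of the fixed point distribution: the number of fixed
points of `m_k` (the points `j/(k-1) (mod ℤ)`) in the interior of the partition
interval `I i`. -/
def fixDist (q k : ℕ) [NeZero q] (x : ZMod q → ℝ) (i : ZMod q) : ℕ :=
  ((Finset.Icc 1 (2 * (k - 1))).filter fun j : ℕ =>
    x i < (j : ℝ) / ((k : ℝ) - 1) ∧ (j : ℝ) / ((k : ℝ) - 1) < upperPt q x i).card

/-- The number of fixed points of `m_k` in the interval `(0, x 1)`. -/
def countFixBelow (q k : ℕ) [NeZero q] (x : ZMod q → ℝ) : ℕ :=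
  ((Finset.range (k - 1)).filter fun j : ℕ =>
    0 < j ∧ (j : ℝ) / ((k : ℝ) - 1) < x 1).card

/-- The `m`-th component of the (cumulative) deployment vector: the number of
orbit points in `(0, m/(k-1))`. -/
def depCount (q k : ℕ) [NeZero q] (x : ZMod q → ℝ) (m : ℕ) : ℕ :=
  (Finset.univ.filter fun j : ZMod q => x j < (m : ℝ) / ((k : ℝ) - 1)).card

/-- The rank of a marked index `i` among the marked indices `i₁ < ⋯ < i_{d-1}`
(ordered by their representatives in `{1, …, q}`). -/
def markRank (q : ℕ) [NeZero q] (σ : Equiv.Perm (ZMod q)) (i : ZMod q) : ℕ :=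
  (Finset.univ.filter fun i' : ZMod q =>
    transMatrix q σ i' i' = 1 ∧ rep q i' ≤ rep q i).card

/-!
A realization must satisfy `k x_i = x_{σ i} + d_i` with integer digits `d_i`, and
`⌊(k-1) x_i⌋` counts the fixed points `j/(k-1)` below `x_i`; so `d_i` is that count, which `w`
determines, plus one if `i` is a descent of `σ`. Conversely, since `k > 1` the linear system
`k x = x ∘ σ + d` has exactly one solution. It lies in `(0,1)` because the digits lie in
`[0, k-1]` and are neither all `0` nor all `k-1`, and it is increasing because the marked
indices recorded in `w` make the digit sequences of `x_1, …, x_q` lexicographically increasing.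
-/

open Set

section ShiftEquation

variable {ι : Type*} [Finite ι] {k : ℝ}

theorem eq_zero_of_mul_eq_comp (hk : 1 < k) {σ : ι → ι} {z : ι → ℝ}
    (hz : ∀ i, k * z i = z (σ i)) : z = 0 := by
  funext p
  have : Nonempty ι := ⟨p⟩
  obtain ⟨m, hm⟩ := Finite.exists_max fun i => |z i|
  have hkm : k * |z m| ≤ |z m| :=
    calc k * |z m| = |z (σ m)| := by rw [← hz, abs_mul, abs_of_pos (zero_lt_one.trans hk)]
      _ ≤ |z m| := hm _
  have hzm : |z m| ≤ 0 := by nlinarith [abs_nonneg (z m)]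
  exact abs_nonpos_iff.1 ((hm p).trans hzm)

/-- The operator `x ↦ k • x - x ∘ σ` is injective on a finite-dimensional space, hence
bijective. -/
theorem existsUnique_mul_eq_comp_add (hk : 1 < k) (σ : ι → ι) (d : ι → ℝ) :
    ∃! x : ι → ℝ, ∀ i, k * x i = x (σ i) + d i := by
  let L : (ι → ℝ) →ₗ[ℝ] ι → ℝ := k • LinearMap.id - LinearMap.funLeft ℝ ℝ σ
  have hL : ∀ x i, L x i = k * x i - x (σ i) := fun _ _ => rfl
  have hinj : Function.Injective L := by
    refine (injective_iff_map_eq_zero L).2 fun z hz =>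
      eq_zero_of_mul_eq_comp hk (σ := σ) fun i => ?_
    have := hL z i
    rw [hz, Pi.zero_apply] at this
    linarith
  obtain ⟨x, hx⟩ := LinearMap.injective_iff_surjective.1 hinj d
  refine ⟨x, fun i => ?_, fun y hy => hinj ?_⟩
  · linarith [hL x i, congrFun hx i]
  · funext i
    linarith [hL x i, hL y i, congrFun hx i, hy i]

end ShiftEquation

section TransitivePerm

variable {ι : Type*} {σ : Equiv.Perm ι}

theorem forall_of_isInvariant (hσ : ∀ i j, ∃ n : ℕ, (σ ^ n) i = j) {P : ι → Prop} {i : ι}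
    (hi : P i) (hP : ∀ j, P j → P (σ j)) (j : ι) : P j := by
  obtain ⟨n, rfl⟩ := hσ i j
  induction n with
  | zero => exact hi
  | succ n ih => rw [pow_succ', Equiv.Perm.mul_apply]; exact hP _ ih

variable [Finite ι] {k : ℝ} {d x : ι → ℝ}

/-- The zero set of `x` is `σ`-invariant, so by transitivity it is empty or everything. -/
theorem pos_of_mul_eq_comp_add (hσ : ∀ i j, ∃ n : ℕ, (σ ^ n) i = j) (hk : 1 < k)
    (hd : ∀ i, 0 ≤ d i) (hd_pos : ∃ i, 0 < d i) (hx : ∀ i, k * x i = x (σ i) + d i) (i : ι) :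
    0 < x i := by
  have : Nonempty ι := ⟨i⟩
  have hnonneg : ∀ j, 0 ≤ x j := by
    obtain ⟨m, hm⟩ := Finite.exists_min x
    have hxm : 0 ≤ x m := by nlinarith [hx m, hd m, hm (σ m)]
    exact fun j => hxm.trans (hm j)
  refine (hnonneg i).lt_of_ne' fun hxi => ?_
  have hzero : ∀ j, x j = 0 := forall_of_isInvariant hσ hxi fun j hj => by
    have := hx j
    rw [hj, mul_zero] at this
    linarith [hd j, hnonneg (σ j)]
  obtain ⟨i₀, hi₀⟩ := hd_pos
  have := hx i₀
  rw [hzero, hzero, mul_zero] at this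
  linarith

theorem mem_Ioo_of_mul_eq_comp_add (hσ : ∀ i j, ∃ n : ℕ, (σ ^ n) i = j) (hk : 1 < k)
    (hd₀ : ∀ i, 0 ≤ d i) (hd₁ : ∀ i, d i ≤ k - 1) (hd_pos : ∃ i, 0 < d i)
    (hd_lt : ∃ i, d i < k - 1) (hx : ∀ i, k * x i = x (σ i) + d i) (i : ι) :
    x i ∈ Ioo 0 1 := by
  refine ⟨pos_of_mul_eq_comp_add hσ hk hd₀ hd_pos hx i, ?_⟩
  have := pos_of_mul_eq_comp_add hσ hk (d := fun i => k - 1 - d i) (x := fun i => 1 - x i)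
    (fun i => by linarith [hd₁ i]) (hd_lt.imp fun i hi => by linarith)
    (fun i => by linarith [hx i]) i
  linarith

end TransitivePerm

section LexOrder

variable {ι β : Type*} [Preorder β] {σ : Equiv.Perm ι} {r : ι → β} {k : ℝ}
  {d : ι → ℕ} {x : ι → ℝ}

theorem sub_pos_or_lex_step (hk : 1 < k) (hx01 : ∀ i, x i ∈ Ioo 0 1)
    (hx : ∀ i, k * x i = x (σ i) + d i)
    (hlex : ∀ i j, r i < r j → d i < d j ∨ d i = d j ∧ r (σ i) < r (σ j)) {a b : ι}
    (hab : r a < r b) :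
    0 < x b - x a ∨ r (σ a) < r (σ b) ∧ k * (x b - x a) = x (σ b) - x (σ a) := by
  rcases hlex a b hab with hd | ⟨hd, hσab⟩
  · left
    have hd' : (d a : ℝ) + 1 ≤ d b := by exact_mod_cast hd
    nlinarith [hx a, hx b, (hx01 (σ a)).2, (hx01 (σ b)).1]
  · right
    refine ⟨hσab, ?_⟩
    have := hx a
    rw [hd] at this
    linarith [hx b]

variable [Finite ι]

/-- A tie `x a = x b` propagates along the orbit with the `r`-order of the pair preserved;
since `b = σ^N a`, this gives a strictly `r`-increasing sequence `σ^(jN) a` in a finite type. -/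
theorem ne_of_lex (hσ : ∀ i j, ∃ n : ℕ, (σ ^ n) i = j) (hk : 1 < k)
    (hx01 : ∀ i, x i ∈ Ioo 0 1) (hx : ∀ i, k * x i = x (σ i) + d i)
    (hlex : ∀ i j, r i < r j → d i < d j ∨ d i = d j ∧ r (σ i) < r (σ j)) {a b : ι}
    (hab : r a < r b) : x a ≠ x b := by
  intro hxab
  have htie : ∀ n : ℕ, r ((σ ^ n) a) < r ((σ ^ n) b) ∧ x ((σ ^ n) a) = x ((σ ^ n) b) := by
    intro n
    induction n with
    | zero => exact ⟨hab, hxab⟩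
    | succ n ih =>
      simp only [pow_succ', Equiv.Perm.mul_apply]
      rcases sub_pos_or_lex_step hk hx01 hx hlex ih.1 with h | ⟨hr, hstep⟩
      · linarith [ih.2]
      · rw [ih.2, sub_self, mul_zero] at hstep
        exact ⟨hr, by linarith⟩
  obtain ⟨N, rfl⟩ := hσ a b
  have hchain : StrictMono fun j : ℕ => r ((σ ^ (j * N)) a) := strictMono_nat_of_lt_succ fun j => by
    simpa only [add_mul, one_mul, pow_add, Equiv.Perm.mul_apply] using (htie (j * N)).1
  exact not_injective_infinite_finite _ (Function.Injective.of_comp (f := r) hchain.injective)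

theorem lt_of_lex (hσ : ∀ i j, ∃ n : ℕ, (σ ^ n) i = j) (hk : 1 < k)
    (hx01 : ∀ i, x i ∈ Ioo 0 1) (hx : ∀ i, k * x i = x (σ i) + d i)
    (hlex : ∀ i j, r i < r j → d i < d j ∨ d i = d j ∧ r (σ i) < r (σ j)) {a b : ι}
    (hab : r a < r b) : x a < x b := by
  suffices hle : ∀ a b, r a < r b → x a ≤ x b from
    (hle a b hab).lt_of_ne (ne_of_lex hσ hk hx01 hx hlex hab)
  by_contra! hneg
  obtain ⟨a, b, hab, hba⟩ := hneg
  let Pairs := {p : ι × ι // r p.1 < r p.2}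
  have : Nonempty Pairs := ⟨⟨(a, b), hab⟩⟩
  obtain ⟨⟨⟨a', b'⟩, h'⟩, hmin⟩ := Finite.exists_min fun p : Pairs => x p.1.2 - x p.1.1
  have hneg : x b' - x a' < 0 := (hmin ⟨(a, b), hab⟩).trans_lt (by linarith)
  rcases sub_pos_or_lex_step hk hx01 hx hlex h' with hpos | ⟨hσab, hstep⟩
  · linarith
  · nlinarith [hmin ⟨(σ a', σ b'), hσab⟩]

end LexOrder

theorem apply_ne_self_of_isQCycle {q : ℕ} {σ : Equiv.Perm (ZMod q)} (hσ : IsQCycle q σ) (hq : 2 ≤ q)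
    (i : ZMod q) : σ i ≠ i := by
  intro h
  have : Fact (1 < q) := ⟨hq⟩
  obtain ⟨n, hn⟩ := hσ i (i + 1)
  rw [Equiv.Perm.pow_apply_eq_self_of_apply_eq_self h] at hn
  simp at hn

section Rep

variable {q : ℕ} [NeZero q]

theorem one_le_rep (i : ZMod q) : 1 ≤ rep q i := by
  unfold rep
  split_ifs with h
  · exact Nat.one_le_iff_ne_zero.2 (NeZero.ne q)
  · exact Nat.one_le_iff_ne_zero.2 ((ZMod.val_ne_zero i).2 h)

theorem rep_le (i : ZMod q) : rep q i ≤ q := by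
  unfold rep
  split_ifs
  exacts [le_rfl, (ZMod.val_lt i).le]

theorem natCast_rep (i : ZMod q) : (rep q i : ZMod q) = i := by
  unfold rep
  split_ifs with h
  · rw [h, ZMod.natCast_self]
  · exact ZMod.natCast_zmod_val i

theorem rep_injective : Function.Injective (rep q) := fun i j h => by
  rw [← natCast_rep i, ← natCast_rep j, h]

theorem rep_natCast {m : ℕ} (h₁ : 1 ≤ m) (h₂ : m ≤ q) : rep q (m : ZMod q) = m := by
  rcases h₂.eq_or_lt with rfl | h
  · simp [rep]
  · have hm : (m : ZMod q) ≠ 0 := fun h0 => by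
      have := ZMod.val_cast_of_lt h
      rw [h0, ZMod.val_zero] at this
      omega
    rw [rep, if_neg hm, ZMod.val_cast_of_lt h]

theorem val_sub_eq_ite (i j : ZMod q) :
    (i - j).val = if rep q j ≤ rep q i then rep q i - rep q j else q + rep q i - rep q j := by
  have hi := rep_le i
  have hj := one_le_rep j
  have hj' := rep_le j
  split_ifs with h
  · have hij : i - j = ((rep q i - rep q j : ℕ) : ZMod q) := by
      rw [Nat.cast_sub h, natCast_rep, natCast_rep]
    rw [hij, ZMod.val_cast_of_lt (by omega)]
  · have hij : i - j = ((q + rep q i - rep q j : ℕ) : ZMod q) := by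
      rw [Nat.cast_sub (by omega), Nat.cast_add, ZMod.natCast_self, zero_add, natCast_rep,
        natCast_rep]
    rw [hij, ZMod.val_cast_of_lt (by omega)]

theorem card_filter_rep_le {r : ℕ} (hr : r ≤ q) :
    (Finset.univ.filter fun p : ZMod q => rep q p ≤ r).card = r := by
  have himage : (Finset.univ.filter fun p : ZMod q => rep q p ≤ r) =
      (Finset.Icc 1 r).image (Nat.cast : ℕ → ZMod q) := by
    ext p
    simp only [Finset.mem_filter, Finset.mem_univ, true_and, Finset.mem_image, Finset.mem_Icc]
    refine ⟨fun h => ⟨rep q p, ⟨one_le_rep p, h⟩, natCast_rep p⟩, ?_⟩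
    rintro ⟨m, ⟨hm₁, hm₂⟩, rfl⟩
    rwa [rep_natCast hm₁ (hm₂.trans hr)]
  rw [himage, Finset.card_image_of_injOn, Nat.card_Icc, Nat.add_sub_cancel]
  intro m hm m' hm' h
  simp only [Finset.coe_Icc, Set.mem_Icc] at hm hm'
  rw [← rep_natCast hm.1 (hm.2.trans hr), ← rep_natCast hm'.1 (hm'.2.trans hr), h]

theorem mem_iff_rep_le_card {S : Finset (ZMod q)}
    (hS : ∀ p ∈ S, ∀ p', rep q p' < rep q p → p' ∈ S) (p : ZMod q) :
    p ∈ S ↔ rep q p ≤ S.card := by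
  constructor
  · intro hp
    have hsub : (Finset.univ.filter fun p' : ZMod q => rep q p' ≤ rep q p) ⊆ S := by
      intro p' hp'
      rw [Finset.mem_filter] at hp'
      rcases hp'.2.eq_or_lt with h | h
      · rwa [rep_injective h]
      · exact hS p hp p' h
    simpa only [card_filter_rep_le (rep_le p)] using Finset.card_le_card hsub
  · intro hp
    by_contra hpS
    have hsub : S ⊆ Finset.univ.filter fun p' : ZMod q => rep q p' ≤ rep q p - 1 := by
      intro p' hp'
      rw [Finset.mem_filter]
      refine ⟨Finset.mem_univ p', ?_⟩
      have hne : rep q p' ≠ rep q p := fun h => hpS (rep_injective h ▸ hp')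
      have hnlt : ¬ rep q p < rep q p' := fun h => hpS (hS p' hp' p h)
      omega
    have := Finset.card_le_card hsub
    rw [card_filter_rep_le (by have := rep_le p; omega)] at this
    have := one_le_rep p
    omega

theorem lt_iff_rep_lt_of_strictMono {y : ZMod q → ℝ}
    (hy : ∀ i j, rep q i < rep q j → y i < y j) {i j : ZMod q} :
    y i < y j ↔ rep q i < rep q j := by
  refine ⟨fun h => ?_, hy i j⟩
  by_contra! hji
  rcases hji.eq_or_lt with hij | hji
  · rw [rep_injective hij] at h
    exact lt_irrefl _ h
  · exact lt_asymm h (hy j i hji)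

end Rep

section Marked

variable {q : ℕ} [NeZero q] {σ : Equiv.Perm (ZMod q)}

theorem transMatrix_self_eq_one {p : ZMod q} (hp : (p - σ p).val < (σ (p + 1) - σ p).val) :
    transMatrix q σ p p = 1 := by
  simp [transMatrix, hp]

/-- Across an unmarked index `p` (one with `p ∉ [σ p, σ (p+1))`), the cyclic distance from
`σ p` to `p` does not increase. -/
theorem val_sub_apply_add_one_le (hq : 2 ≤ q) {p : ZMod q}
    (hp : (σ (p + 1) - σ p).val ≤ (p - σ p).val) :
    (p + 1 - σ (p + 1)).val ≤ (p - σ p).val := by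
  have : Fact (1 < q) := ⟨hq⟩
  have hb : (σ (p + 1) - σ p).val ≠ 0 := by
    rw [Ne, ZMod.val_eq_zero, sub_eq_zero, σ.injective.eq_iff]
    simp
  have hsub : (p - σ p - (σ (p + 1) - σ p)).val = (p - σ p).val - (σ (p + 1) - σ p).val :=
    ZMod.val_sub hp
  have hlt := ZMod.val_lt (p - σ p)
  have hadd : (p - σ p - (σ (p + 1) - σ p) + 1).val =
      (p - σ p - (σ (p + 1) - σ p)).val + 1 := by
    rw [ZMod.val_add_of_lt (by rw [hsub, ZMod.val_one]; omega), ZMod.val_one]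
  rw [show p + 1 - σ (p + 1) = p - σ p - (σ (p + 1) - σ p) + 1 by ring, hadd, hsub]
  omega

theorem exists_marked_of_val_sub_lt (hq : 2 ≤ q) {i i' : ZMod q} (hii' : rep q i < rep q i')
    (hgap : (i - σ i).val < (i' - σ i').val) :
    ∃ p, (p - σ p).val < (σ (p + 1) - σ p).val ∧ rep q i ≤ rep q p ∧ rep q p < rep q i' := by
  by_contra! hno
  have hchain : ∀ r, rep q i ≤ r → r ≤ rep q i' →
      ((r : ZMod q) - σ r).val ≤ (i - σ i).val := by
    intro r hr hri'
    induction r, hr using Nat.le_induction with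
    | base => rw [natCast_rep]
    | succ r hr ih =>
      have hrep : rep q (r : ZMod q) = r := rep_natCast (by have := one_le_rep i; omega)
        (by have := rep_le i'; omega)
      have hunmarked : (σ ((r : ZMod q) + 1) - σ r).val ≤ ((r : ZMod q) - σ r).val :=
        not_lt.1 fun hm => by
          have := hno r hm (by rwa [hrep])
          omega
      push_cast
      exact (val_sub_apply_add_one_le hq hunmarked).trans (ih (by omega))
  have := hchain (rep q i') hii'.le le_rfl
  rw [natCast_rep] at this
  omega

end Marked

/-- The number of interior fixed points `j/(k-1)`, `1 ≤ j ≤ k-2`, of `m_k` lying below the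
orbit point of index `t`, as prescribed by the deployment vector `w`. -/
def fixedBelow (k : ℕ) (w : ℕ → ℕ) (t : ℕ) : ℕ :=
  ((Finset.Icc 1 (k - 2)).filter fun j => w j < t).card

/-- The first base-`k` digit of the orbit point of index `i`. -/
def digit (q k : ℕ) [NeZero q] (σ : Equiv.Perm (ZMod q)) (w : ℕ → ℕ) (i : ZMod q) : ℕ :=
  fixedBelow k w (rep q i) + if rep q (σ i) < rep q i then 1 else 0

section Digits

variable {q k : ℕ} {w : ℕ → ℕ}

theorem fixedBelow_le (t : ℕ) : fixedBelow k w t ≤ k - 2 :=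
  (Finset.card_filter_le _ _).trans (by simp)

theorem fixedBelow_mono {t t' : ℕ} (h : t ≤ t') : fixedBelow k w t ≤ fixedBelow k w t' :=
  Finset.card_le_card (Finset.monotone_filter_right _ fun _ _ hj => hj.trans_le h)

theorem monotoneOn_Icc_of_le_succ (hmono : ∀ m : ℕ, 1 ≤ m → m < k - 1 → w m ≤ w (m + 1)) :
    MonotoneOn w (Set.Icc 1 (k - 1)) :=
  monotoneOn_of_le_succ Set.ordConnected_Icc fun a _ ha ha' => by
    simp only [Set.mem_Icc, Order.succ_eq_add_one] at ha ha' ⊢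
    exact hmono a ha.1 (by omega)

theorem fixedBelow_lt_iff (hmono : ∀ m : ℕ, 1 ≤ m → m < k - 1 → w m ≤ w (m + 1))
    (hlast : w (k - 1) = q) {m t : ℕ} (hm₁ : 1 ≤ m) (hmk : m ≤ k - 1) (ht : t ≤ q) :
    fixedBelow k w t < m ↔ t ≤ w m := by
  have hw := monotoneOn_Icc_of_le_succ hmono
  rcases hmk.eq_or_lt with rfl | hmk
  · have := fixedBelow_le (k := k) (w := w) t
    omega
  unfold fixedBelow
  constructor
  · intro h
    by_contra! hwt
    have hsub : Finset.Icc 1 m ⊆ (Finset.Icc 1 (k - 2)).filter fun j => w j < t := by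
      intro j hj
      simp only [Finset.mem_Icc, Finset.mem_filter] at hj ⊢
      exact ⟨⟨hj.1, by omega⟩, (hw ⟨hj.1, by omega⟩ ⟨hm₁, by omega⟩ hj.2).trans_lt hwt⟩
    have := Finset.card_le_card hsub
    simp only [Nat.card_Icc] at this
    omega
  · intro htw
    have hsub : ((Finset.Icc 1 (k - 2)).filter fun j => w j < t) ⊆ Finset.Icc 1 (m - 1) := by
      intro j hj
      simp only [Finset.mem_Icc, Finset.mem_filter] at hj ⊢
      refine ⟨hj.1.1, not_lt.1 fun hmj => ?_⟩
      have := hw ⟨hm₁, by omega⟩ ⟨hj.1.1, by omega⟩ (by omega : m ≤ j)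
      omega
    have := Finset.card_le_card hsub
    simp only [Nat.card_Icc] at this
    omega

variable [NeZero q] {σ : Equiv.Perm (ZMod q)}

/-- A marked index `p` with `rep i ≤ rep p < rep i'` occurs in `w` at some position `m`, which
separates the fixed points below `i` from those below `i'`. -/
theorem fixedBelow_lt_of_val_sub_lt (hq : 2 ≤ q)
    (hmono : ∀ m : ℕ, 1 ≤ m → m < k - 1 → w m ≤ w (m + 1)) (hlast : w (k - 1) = q)
    (hmark : ∀ i : ZMod q, transMatrix q σ i i = 1 →
      ∃ m : ℕ, 1 ≤ m ∧ m ≤ k - 1 ∧ w m = rep q i)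
    {i i' : ZMod q} (hii' : rep q i < rep q i') (hgap : (i - σ i).val < (i' - σ i').val) :
    fixedBelow k w (rep q i) < fixedBelow k w (rep q i') := by
  obtain ⟨p, hp, hip, hpi'⟩ := exists_marked_of_val_sub_lt hq hii' hgap
  obtain ⟨m, hm₁, hmk, hwm⟩ := hmark p (transMatrix_self_eq_one hp)
  have hi := (fixedBelow_lt_iff hmono hlast hm₁ hmk (rep_le i)).2 (by omega)
  have hi' := (fixedBelow_lt_iff hmono hlast hm₁ hmk (rep_le i')).not.2 (by omega)
  omega

theorem digit_lex (hσ : IsQCycle q σ) (hq : 2 ≤ q)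
    (hmono : ∀ m : ℕ, 1 ≤ m → m < k - 1 → w m ≤ w (m + 1)) (hlast : w (k - 1) = q)
    (hmark : ∀ i : ZMod q, transMatrix q σ i i = 1 →
      ∃ m : ℕ, 1 ≤ m ∧ m ≤ k - 1 ∧ w m = rep q i)
    {i i' : ZMod q} (hii' : rep q i < rep q i') :
    digit q k σ w i < digit q k σ w i' ∨
      digit q k σ w i = digit q k σ w i' ∧ rep q (σ i) < rep q (σ i') := by
  have hgrow := fixedBelow_lt_of_val_sub_lt hq hmono hlast hmark hii'
  have hle := fixedBelow_mono (k := k) (w := w) hii'.le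
  have hi := rep_injective.ne (apply_ne_self_of_isQCycle hσ hq i)
  have hi' := rep_injective.ne (apply_ne_self_of_isQCycle hσ hq i')
  have hσii' := rep_injective.ne (σ.injective.ne (rep_injective.ne_iff.1 hii'.ne))
  have := rep_le i'; have := rep_le (σ i'); have := one_le_rep (σ i)
  rw [val_sub_eq_ite, val_sub_eq_ite] at hgrow
  -- Whenever the digits could be out of order, `(i, i')` is a crossing or nested pair, and for
  -- those the cyclic distance from `σ i` to `i` is smaller than that from `σ i'` to `i'`.
  unfold digit
  split_ifs at hgrow ⊢ <;> omega

theorem digit_le (hk : 2 ≤ k) (i : ZMod q) : digit q k σ w i ≤ k - 1 := by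
  have := fixedBelow_le (k := k) (w := w) (rep q i)
  unfold digit
  split_ifs <;> omega

theorem exists_digit_pos (hσ : IsQCycle q σ) (hq : 2 ≤ q) : ∃ i, 0 < digit q k σ w i := by
  refine ⟨σ.symm 1, ?_⟩
  have h1 : rep q 1 = 1 := by simpa using rep_natCast (q := q) le_rfl (by omega : 1 ≤ q)
  have hrep : rep q (σ (σ.symm 1)) = 1 := by rw [Equiv.apply_symm_apply, h1]
  have hne : σ.symm 1 ≠ 1 := fun h => apply_ne_self_of_isQCycle hσ hq (σ.symm 1) (by
    rw [Equiv.apply_symm_apply, h])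
  have : rep q (σ.symm 1) ≠ 1 := fun h => hne (rep_injective (by rw [h, h1]))
  have := one_le_rep (σ.symm 1)
  unfold digit
  rw [if_pos (by omega)]
  omega

theorem exists_digit_lt (hk : 2 ≤ k) : ∃ i, digit q k σ w i < k - 1 := by
  refine ⟨σ.symm 0, ?_⟩
  have hrep : rep q (σ (σ.symm 0)) = q := by simp [rep]
  have := rep_le (σ.symm 0)
  have := fixedBelow_le (k := k) (w := w) (rep q (σ.symm 0))
  unfold digit
  rw [if_neg (by omega)]
  omega

end Digits

theorem floor_sub_one_mul_eq {k a b : ℝ} {e : ℤ} (ha : a ∈ Ioo 0 1) (hb : b ∈ Ioo 0 1)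
    (h : k * a = b + e) : ⌊(k - 1) * a⌋ = e - if b < a then 1 else 0 := by
  rw [Int.floor_eq_iff]
  obtain ⟨ha₀, ha₁⟩ := ha
  obtain ⟨hb₀, hb₁⟩ := hb
  split_ifs <;> push_cast <;> constructor <;> linarith

theorem lt_div_sub_one_iff_floor_lt {k : ℝ} (hk : 1 < k) (a : ℝ) (m : ℕ) :
    a < m / (k - 1) ↔ ⌊(k - 1) * a⌋ < m := by
  rw [Int.floor_lt, Int.cast_natCast, lt_div_iff₀ (by linarith), mul_comm]

section Realizations

variable {q k : ℕ} [NeZero q] {σ : Equiv.Perm (ZMod q)} {w : ℕ → ℕ}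

theorem MkRealization.floor_mul_eq {y : ZMod q → ℝ} (hy : MkRealization q k σ y)
    {e : ZMod q → ℤ} (he : ∀ i, (k : ℝ) * y i = y (σ i) + e i) (p : ZMod q) :
    ⌊((k : ℝ) - 1) * y p⌋ = e p - if rep q (σ p) < rep q p then 1 else 0 := by
  rw [floor_sub_one_mul_eq (hy.1 p) (hy.1 (σ p)) (he p)]
  simp only [lt_iff_rep_lt_of_strictMono hy.2.1]

theorem MkRealization.lt_div_iff_rep_le_depCount {y : ZMod q → ℝ} (hy : MkRealization q k σ y)
    (m : ℕ) (p : ZMod q) : y p < m / ((k : ℝ) - 1) ↔ rep q p ≤ depCount q k y m := by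
  have := mem_iff_rep_le_card (S := Finset.univ.filter fun j => y j < m / ((k : ℝ) - 1))
    (fun p hp p' hp' => by
      simp only [Finset.mem_filter, Finset.mem_univ, true_and] at hp ⊢
      exact (hy.2.1 _ _ hp').trans hp) p
  simpa only [depCount, Finset.mem_filter, Finset.mem_univ, true_and] using this

theorem mkRealization_of_mul_eq_digit (hσ : IsQCycle q σ) (hq : 2 ≤ q) (hk : 2 ≤ k)
    (hmono : ∀ m : ℕ, 1 ≤ m → m < k - 1 → w m ≤ w (m + 1)) (hlast : w (k - 1) = q)
    (hmark : ∀ i : ZMod q, transMatrix q σ i i = 1 →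
      ∃ m : ℕ, 1 ≤ m ∧ m ≤ k - 1 ∧ w m = rep q i)
    {x : ZMod q → ℝ} (hx : ∀ i, (k : ℝ) * x i = x (σ i) + digit q k σ w i) :
    MkRealization q k σ x := by
  have hk' : (1 : ℝ) < k := by exact_mod_cast hk
  have hdigit_le : ∀ i, (digit q k σ w i : ℝ) ≤ k - 1 := fun i => by
    have := digit_le (σ := σ) (w := w) hk i
    have : (digit q k σ w i : ℝ) + 1 ≤ k := by exact_mod_cast (by omega)
    linarith
  have hdigit_lt : ∃ i, (digit q k σ w i : ℝ) < k - 1 :=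
    (exists_digit_lt (σ := σ) (w := w) hk).imp fun i hi => by
      have : (digit q k σ w i : ℝ) + 1 < k := by exact_mod_cast (by omega)
      linarith
  have hx01 : ∀ i, x i ∈ Ioo 0 1 := mem_Ioo_of_mul_eq_comp_add hσ hk'
    (fun i => Nat.cast_nonneg _) hdigit_le
    ((exists_digit_pos hσ hq).imp fun i hi => Nat.cast_pos.2 hi) hdigit_lt hx
  exact ⟨hx01, fun i j => lt_of_lex hσ hk' hx01 hx fun i i' => digit_lex hσ hq hmono hlast hmark,
    fun i => ⟨digit q k σ w i, by rw [Int.cast_natCast]; exact hx i⟩⟩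

theorem depCount_eq_of_mul_eq_digit
    (hmono : ∀ m : ℕ, 1 ≤ m → m < k - 1 → w m ≤ w (m + 1)) (hlast : w (k - 1) = q)
    {x : ZMod q → ℝ} (hx : MkRealization q k σ x)
    (hxd : ∀ i, (k : ℝ) * x i = x (σ i) + digit q k σ w i) {m : ℕ} (hm₁ : 1 ≤ m)
    (hmk : m ≤ k - 1) : depCount q k x m = w m := by
  have hk : (1 : ℝ) < k := by exact_mod_cast (by omega : 1 < k)
  have hfloor : ∀ p, ⌊((k : ℝ) - 1) * x p⌋ = fixedBelow k w (rep q p) := fun p => by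
    rw [hx.floor_mul_eq (e := fun i => digit q k σ w i) (by simpa using hxd) p]
    unfold digit
    split_ifs <;> push_cast <;> ring
  have hiff : ∀ p, x p < m / ((k : ℝ) - 1) ↔ rep q p ≤ w m := fun p => by
    rw [lt_div_sub_one_iff_floor_lt hk, hfloor, Nat.cast_lt,
      fixedBelow_lt_iff hmono hlast hm₁ hmk (rep_le p)]
  have hwm : w m ≤ q := hlast ▸ monotoneOn_Icc_of_le_succ hmono ⟨hm₁, hmk⟩
    ⟨by omega, le_rfl⟩ hmk
  unfold depCount
  rw [Finset.filter_congr fun p _ => hiff p]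
  exact card_filter_rep_le hwm

theorem mul_eq_digit_of_depCount (hk : 2 ≤ k)
    (hmono : ∀ m : ℕ, 1 ≤ m → m < k - 1 → w m ≤ w (m + 1)) (hlast : w (k - 1) = q)
    {y : ZMod q → ℝ} (hy : MkRealization q k σ y)
    (hdep : ∀ m : ℕ, 1 ≤ m → m ≤ k - 1 → depCount q k y m = w m) (i : ZMod q) :
    (k : ℝ) * y i = y (σ i) + digit q k σ w i := by
  have hk' : (1 : ℝ) < k := by exact_mod_cast hk
  choose e he using hy.2.2
  replace he : ∀ i, (k : ℝ) * y i = y (σ i) + e i := he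
  have hfloor := hy.floor_mul_eq he i
  have hiff : ∀ m, 1 ≤ m → m ≤ k - 1 →
      (⌊((k : ℝ) - 1) * y i⌋ < m ↔ fixedBelow k w (rep q i) < m) := by
    intro m hm₁ hmk
    rw [← lt_div_sub_one_iff_floor_lt hk', fixedBelow_lt_iff hmono hlast hm₁ hmk (rep_le i),
      ← hdep m hm₁ hmk, hy.lt_div_iff_rep_le_depCount]
  obtain ⟨n, hn⟩ := Int.eq_ofNat_of_zero_le
    (Int.floor_nonneg.2 (mul_nonneg (by linarith : (0 : ℝ) ≤ k - 1) (hy.1 i).1.le))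
  rw [hn] at hiff hfloor
  have hc := fixedBelow_le (k := k) (w := w) (rep q i)
  have hn_lt := (hiff (k - 1) (by omega) le_rfl).2 (by omega)
  have hnc : n = fixedBelow k w (rep q i) := by
    rcases lt_trichotomy n (fixedBelow k w (rep q i)) with h | h | h
    · have := hiff (fixedBelow k w (rep q i)) (by omega) (by omega)
      omega
    · exact h
    · have := hiff n (by omega) (by omega)
      omega
  have hei : e i = digit q k σ w i := by
    unfold digit
    split_ifs at hfloor ⊢ <;> push_cast <;> omega
  rw [he i, hei, Int.cast_natCast]

end Realizations

theorem realization_from_deployment_vector_general (q k : ℕ) [NeZero q] (hq : 2 ≤ q)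
    (σ : Equiv.Perm (ZMod q)) (hσ : IsQCycle q σ)
    (hk2 : 2 ≤ k)
    (w : ℕ → ℕ)
    (hmono : ∀ m : ℕ, 1 ≤ m → m < k - 1 → w m ≤ w (m + 1))
    (hlast : w (k - 1) = q)
    (hmark : ∀ i : ZMod q, transMatrix q σ i i = 1 →
      ∃ m : ℕ, 1 ≤ m ∧ m ≤ k - 1 ∧ w m = rep q i) :
    ∃! x : ZMod q → ℝ, MkRealization q k σ x ∧
      ∀ m : ℕ, 1 ≤ m → m ≤ k - 1 → depCount q k x m = w m := by
  obtain ⟨x, hx, hx_unique⟩ :=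
    existsUnique_mul_eq_comp_add (by exact_mod_cast hk2 : (1 : ℝ) < k) σ
      fun i => (digit q k σ w i : ℝ)
  have hxr := mkRealization_of_mul_eq_digit hσ hq hk2 hmono hlast hmark hx
  refine ⟨x, ⟨hxr, fun m hm₁ hmk => depCount_eq_of_mul_eq_digit hmono hlast hxr hx hm₁ hmk⟩, ?_⟩
  rintro y ⟨hyr, hdep⟩
  exact hx_unique y (mul_eq_digit_of_depCount hk2 hmono hlast hyr hdep)

/-- The Realization Theorem: let `σ` be a `q`-cycle with `des σ = d` and let
`k ≥ max {d, 2}`. For every `σ`-admissible deployment vector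
`w = (w₁, …, w_{k-1})` (non-decreasing, `w_{k-1} = q`, and every marked index
`i₁, …, i_{d-1}` of the signature appears among the components) there is a
unique realization `𝒪` of `σ` under `m_k` with `dep 𝒪 = w`. -/
theorem realization_from_deployment_vector (q d k : ℕ) [NeZero q] (hq : 2 ≤ q)
    (σ : Equiv.Perm (ZMod q)) (hσ : IsQCycle q σ) (hd : desNum q σ = d)
    (hk2 : 2 ≤ k) (hkd : d ≤ k)
    (w : ℕ → ℕ)
    (hmono : ∀ m : ℕ, 1 ≤ m → m < k - 1 → w m ≤ w (m + 1))
    (hlast : w (k - 1) = q)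
    (hmark : ∀ i : ZMod q, transMatrix q σ i i = 1 →
      ∃ m : ℕ, 1 ≤ m ∧ m ≤ k - 1 ∧ w m = rep q i) :
    ∃! x : ZMod q → ℝ, MkRealization q k σ x ∧
      ∀ m : ℕ, 1 ≤ m → m ≤ k - 1 → depCount q k x m = w m :=
  realization_from_deployment_vector_general q k hq σ hσ hk2 w hmono hlast hmark
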